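/- arXiv:2502.12037 — 2 statements merged into one kernel-verified Lean document; each statement's English description precedes it below -/
import Mathlib

section
/- Let a₊, a₋ ∈ (0,2)\{1}, let C₊, C₋, λ₊, λ₋, μ₊, μ₋ > 0 and T > 0. Define r : ℝ → ℝ by r(x) = exp(−(λ₊−μ₊)x) for x > 0 and r(x) = exp(−(λ₋−μ₋)|x|) for x < 0, and let ℓ̃ be the GTS Lévy density with parameters (a₊, a₋, C₊, C₋, μ₊, μ₋). Then the function x ↦ (r(x)·log r(x) − r(x) + 1)·ℓ̃(x) is integrable on ℝ and T·∫_ℝ (r(x)·log r(x) − r(x) + 1)·ℓ̃(x) dx = T·C₊·Γ(−a₊)·((a₊−1)·λ₊^{a₊} − a₊·μ₊·λ₊^{a₊−1} + μ₊^{a₊}) + T·C₋·Γ(−a₋)·((a₋−1)·λ₋^{a₋} − a₋·μ₋·λ₋^{a₋−1} + μ₋^{a₋}). -/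
open MeasureTheory Real Set
open Filter Topology

/-!
Substituting `r`, the integrand on `x > 0` is `C₊ k(x) x^(-a₊-1)` with
`k(x) = e^(-μx) - e^(-λx) - (λ-μ) x e^(-λx) = e^(-λx) (e^((λ-μ)x) - 1 - (λ-μ)x)`,
and symmetrically on `x < 0`. This `k` is nonnegative, `O(x²)` at `0` and exponentially small
at `∞`, so `M(s) = ∫₀^∞ k(x) x^(s-1) dx` converges for `s > -2`. For `s > 0` it is a sum of
Gamma integrals, `M(s) = Γ(s) (μ^(-s) - λ^(-s) - (λ-μ) s λ^(-s-1))`. Since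
`k' = -μ k + (λ-μ)² x e^(-λx)`, integration by parts gives
`s M(s) = μ M(s+1) - (λ-μ)² Γ(s+2) λ^(-s-2)`, a recurrence the Gamma expression satisfies as
well; stepping down from `s > 0` extends the formula to `s ∈ (-2, 0) \ {-1}`, and `s = -a` is
the claim.
-/

/-- The GTS (generalized tempered stable) Lévy density with parameters
`(a₊, a₋, C₊, C₋, θ₊, θ₋)`. -/
noncomputable def gtsDensity (ap am Cp Cm tp tm : ℝ) (x : ℝ) : ℝ :=
  if 0 < x then Cp * exp (-(tp * x)) * x ^ (-ap - 1)
  else if x < 0 then Cm * exp (-(tm * |x|)) * |x| ^ (-am - 1)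
  else 0

lemma exp_sub_one_sub_le (u : ℝ) : exp u - 1 - u ≤ u ^ 2 * (1 + exp u) := by
  have h := mul_le_mul_of_nonneg_left (add_one_le_exp (-u)) (exp_pos u).le
  rw [mul_add, mul_one, ← exp_add, add_neg_cancel, exp_zero] at h
  rcases le_total 0 u with hu | hu <;> nlinarith [add_one_le_exp u, exp_pos u, sq_nonneg u]

lemma integrableOn_rpow_mul_exp_neg_mul {p θ : ℝ} (hp : -1 < p) (hθ : 0 < θ) :
    IntegrableOn (fun x : ℝ => x ^ p * exp (-(θ * x))) (Ioi 0) := by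
  simpa using integrableOn_rpow_mul_exp_neg_mul_rpow hp one_pos hθ

lemma integral_rpow_mul_exp_neg_mul {p θ : ℝ} (hp : -1 < p) (hθ : 0 < θ) :
    ∫ x in Ioi 0, x ^ p * exp (-(θ * x)) = Gamma (p + 1) * θ ^ (-(p + 1)) := by
  have h := integral_rpow_mul_exp_neg_mul_Ioi (a := p + 1) (by linarith) hθ
  rw [add_sub_cancel_right, one_div, inv_rpow hθ.le, ← rpow_neg hθ.le] at h
  rw [h, mul_comm]

theorem mul_integral_Ioi_mul_rpow_sub_one {f f' : ℝ → ℝ} {s : ℝ}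
    (hf : ∀ x ∈ Ioi 0, HasDerivAt f (f' x) x)
    (hf_int : IntegrableOn (fun x => f x * x ^ (s - 1)) (Ioi 0))
    (hf'_int : IntegrableOn (fun x => f' x * x ^ s) (Ioi 0))
    (h_zero : Tendsto (fun x => f x * x ^ s) (𝓝[>] 0) (𝓝 0))
    (h_infty : Tendsto (fun x => f x * x ^ s) atTop (𝓝 0)) :
    s * ∫ x in Ioi 0, f x * x ^ (s - 1) = -∫ x in Ioi 0, f' x * x ^ s := by
  have hv : ∀ x ∈ Ioi (0 : ℝ), HasDerivAt (fun x => x ^ s) (s * x ^ (s - 1)) x :=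
    fun x hx => hasDerivAt_rpow_const (Or.inl (ne_of_gt hx))
  have hfv : IntegrableOn (fun x => f x * (s * x ^ (s - 1))) (Ioi 0) :=
    IntegrableOn.congr_fun (hf_int.const_mul s) (fun x _ => by ring) measurableSet_Ioi
  have h := integral_Ioi_mul_deriv_eq_deriv_mul hf hv hfv hf'_int h_zero h_infty
  rw [sub_zero, zero_sub] at h
  rw [← integral_const_mul, ← h]
  exact setIntegral_congr_fun measurableSet_Ioi fun x _ => by ring

lemma integrable_indicator_add_indicator_comp_neg {E : Type*} [NormedAddCommGroup E]
    {s : Set ℝ} (hs : MeasurableSet s) {F G : ℝ → E} (hF : IntegrableOn F s)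
    (hG : IntegrableOn G s) : Integrable fun x => s.indicator F x + s.indicator G (-x) :=
  ((integrable_indicator_iff hs).2 hF).add ((integrable_indicator_iff hs).2 hG).comp_neg

lemma integral_indicator_add_indicator_comp_neg {E : Type*} [NormedAddCommGroup E]
    [NormedSpace ℝ E] {s : Set ℝ} (hs : MeasurableSet s) {F G : ℝ → E}
    (hF : IntegrableOn F s) (hG : IntegrableOn G s) :
    ∫ x, (s.indicator F x + s.indicator G (-x)) = (∫ x in s, F x) + ∫ x in s, G x := by
  rw [integral_add ((integrable_indicator_iff hs).2 hF)
      ((integrable_indicator_iff hs).2 hG).comp_neg,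
    integral_neg_eq_self (s.indicator G), integral_indicator hs, integral_indicator hs]

noncomputable def klKernel (lam mu x : ℝ) : ℝ :=
  exp (-(mu * x)) - exp (-(lam * x)) - (lam - mu) * x * exp (-(lam * x))

lemma entropy_mul_exp_eq_klKernel (lam mu x : ℝ) :
    (exp (-((lam - mu) * x)) * log (exp (-((lam - mu) * x))) - exp (-((lam - mu) * x)) + 1)
      * exp (-(mu * x)) = klKernel lam mu x := by
  have h : exp (-((lam - mu) * x)) * exp (-(mu * x)) = exp (-(lam * x)) := by
    rw [← exp_add]; ring_nf
  rw [log_exp, klKernel, ← h]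
  ring

lemma klKernel_eq_mul_exp_sub_one_sub (lam mu x : ℝ) :
    klKernel lam mu x
      = exp (-(lam * x)) * (exp ((lam - mu) * x) - 1 - (lam - mu) * x) := by
  have h : exp (-(lam * x)) * exp ((lam - mu) * x) = exp (-(mu * x)) := by
    rw [← exp_add]; ring_nf
  rw [klKernel, ← h]
  ring

lemma klKernel_nonneg (lam mu x : ℝ) : 0 ≤ klKernel lam mu x := by
  rw [klKernel_eq_mul_exp_sub_one_sub]
  exact mul_nonneg (exp_pos _).le (by linarith [add_one_le_exp ((lam - mu) * x)])

lemma klKernel_le (lam mu x : ℝ) :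
    klKernel lam mu x
      ≤ (lam - mu) ^ 2 * (x ^ 2 * exp (-(lam * x)) + x ^ 2 * exp (-(mu * x))) := by
  have h : exp (-(lam * x)) * exp ((lam - mu) * x) = exp (-(mu * x)) := by
    rw [← exp_add]; ring_nf
  calc klKernel lam mu x
      ≤ exp (-(lam * x)) * (((lam - mu) * x) ^ 2 * (1 + exp ((lam - mu) * x))) := by
        rw [klKernel_eq_mul_exp_sub_one_sub]
        exact mul_le_mul_of_nonneg_left (exp_sub_one_sub_le _) (exp_pos _).le
    _ = _ := by rw [← h]; ring

lemma continuous_klKernel (lam mu : ℝ) : Continuous (klKernel lam mu) := by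
  unfold klKernel; fun_prop

lemma hasDerivAt_klKernel (lam mu x : ℝ) :
    HasDerivAt (klKernel lam mu)
      (-mu * klKernel lam mu x + (lam - mu) ^ 2 * x * exp (-(lam * x))) x := by
  have hexp (θ : ℝ) : HasDerivAt (fun x => exp (-(θ * x))) (-θ * exp (-(θ * x))) x := by
    simpa [mul_comm] using ((hasDerivAt_id x).const_mul θ).neg.exp
  have := ((hexp mu).sub (hexp lam)).sub (((hasDerivAt_id x).const_mul (lam - mu)).mul (hexp lam))
  exact this.congr_deriv (by rw [klKernel, id]; ring)

lemma klKernel_mul_rpow_le (lam mu : ℝ) {x : ℝ} (hx : 0 < x) (s : ℝ) :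
    klKernel lam mu x * x ^ (s - 1)
      ≤ (lam - mu) ^ 2 * (x ^ (s + 1) * exp (-(lam * x)) + x ^ (s + 1) * exp (-(mu * x))) := by
  have hpow : x ^ 2 * x ^ (s - 1) = x ^ (s + 1) := by
    rw [← rpow_two, ← rpow_add hx]; congr 1; ring
  calc klKernel lam mu x * x ^ (s - 1)
      ≤ (lam - mu) ^ 2 * (x ^ 2 * exp (-(lam * x)) + x ^ 2 * exp (-(mu * x))) * x ^ (s - 1) :=
        mul_le_mul_of_nonneg_right (klKernel_le lam mu x) (rpow_nonneg hx.le _)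
    _ = _ := by rw [← hpow]; ring

noncomputable def klKernelMellin (lam mu s : ℝ) : ℝ :=
  Gamma s * (mu ^ (-s) - lam ^ (-s) - (lam - mu) * s * lam ^ (-s - 1))

section

variable {lam mu : ℝ}

lemma integrableOn_klKernel_mul_rpow (hlam : 0 < lam) (hmu : 0 < mu) {s : ℝ} (hs : -2 < s) :
    IntegrableOn (fun x => klKernel lam mu x * x ^ (s - 1)) (Ioi 0) := by
  have hmaj := ((integrableOn_rpow_mul_exp_neg_mul (p := s + 1) (by linarith) hlam).add
    (integrableOn_rpow_mul_exp_neg_mul (p := s + 1) (by linarith) hmu)).const_mul ((lam - mu) ^ 2)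
  refine hmaj.mono' (((continuous_klKernel lam mu).continuousOn.mul
    (continuousOn_id.rpow_const fun x hx => Or.inl (ne_of_gt hx))).aestronglyMeasurable
      measurableSet_Ioi) ?_
  filter_upwards [ae_restrict_mem measurableSet_Ioi] with x (hx : 0 < x)
  rw [Real.norm_of_nonneg (mul_nonneg (klKernel_nonneg _ _ _) (rpow_nonneg hx.le _))]
  exact klKernel_mul_rpow_le lam mu hx s

lemma tendsto_klKernel_mul_rpow_of_tendsto {l : Filter ℝ} (hl : ∀ᶠ x in l, 0 < x) {s : ℝ}
    (h : Tendsto (fun x => x ^ (s + 2) * exp (-(lam * x)) + x ^ (s + 2) * exp (-(mu * x))) l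
      (𝓝 0)) :
    Tendsto (fun x => klKernel lam mu x * x ^ s) l (𝓝 0) := by
  refine squeeze_zero' ?_ ?_ (by simpa using h.const_mul ((lam - mu) ^ 2))
  · filter_upwards [hl] with x hx
    exact mul_nonneg (klKernel_nonneg _ _ _) (rpow_nonneg hx.le _)
  · filter_upwards [hl] with x hx
    simpa [add_assoc, one_add_one_eq_two] using klKernel_mul_rpow_le lam mu hx (s + 1)

lemma tendsto_klKernel_mul_rpow_nhdsGT_zero {s : ℝ} (hs : -2 < s) :
    Tendsto (fun x => klKernel lam mu x * x ^ s) (𝓝[>] 0) (𝓝 0) := by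
  refine tendsto_klKernel_mul_rpow_of_tendsto self_mem_nhdsWithin
    (tendsto_nhdsWithin_of_tendsto_nhds ?_)
  have hcont : Continuous fun x : ℝ =>
      x ^ (s + 2) * exp (-(lam * x)) + x ^ (s + 2) * exp (-(mu * x)) := by
    fun_prop (disch := linarith)
  simpa [zero_rpow (by linarith : s + 2 ≠ 0)] using hcont.tendsto 0

lemma tendsto_klKernel_mul_rpow_atTop (hlam : 0 < lam) (hmu : 0 < mu) (s : ℝ) :
    Tendsto (fun x => klKernel lam mu x * x ^ s) atTop (𝓝 0) := by
  refine tendsto_klKernel_mul_rpow_of_tendsto (eventually_gt_atTop 0) ?_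
  simpa [neg_mul] using (tendsto_rpow_mul_exp_neg_mul_atTop_nhds_zero (s + 2) lam hlam).add
    (tendsto_rpow_mul_exp_neg_mul_atTop_nhds_zero (s + 2) mu hmu)

lemma integral_klKernel_mul_rpow_of_pos (hlam : 0 < lam) (hmu : 0 < mu) {s : ℝ} (hs : 0 < s) :
    ∫ x in Ioi 0, klKernel lam mu x * x ^ (s - 1) = klKernelMellin lam mu s := by
  have hp : -1 < s - 1 := by linarith
  have hexp : ∀ x ∈ Ioi (0 : ℝ), klKernel lam mu x * x ^ (s - 1)
      = x ^ (s - 1) * exp (-(mu * x)) - x ^ (s - 1) * exp (-(lam * x))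
        - (lam - mu) * (x ^ (s - 1 + 1) * exp (-(lam * x))) := fun x hx => by
    rw [rpow_add_one (ne_of_gt hx), klKernel]; ring
  rw [setIntegral_congr_fun measurableSet_Ioi hexp,
    integral_sub ((integrableOn_rpow_mul_exp_neg_mul hp hmu).sub'
      (integrableOn_rpow_mul_exp_neg_mul hp hlam))
      ((integrableOn_rpow_mul_exp_neg_mul (by linarith) hlam).const_mul _),
    integral_sub (integrableOn_rpow_mul_exp_neg_mul hp hmu)
      (integrableOn_rpow_mul_exp_neg_mul hp hlam), integral_const_mul,
    integral_rpow_mul_exp_neg_mul hp hmu, integral_rpow_mul_exp_neg_mul hp hlam,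
    integral_rpow_mul_exp_neg_mul (by linarith) hlam, sub_add_cancel,
    Gamma_add_one hs.ne', neg_add', klKernelMellin]
  ring

lemma integral_klKernel_mul_rpow_recurrence (hlam : 0 < lam) (hmu : 0 < mu) {s : ℝ}
    (hs : -2 < s) :
    s * ∫ x in Ioi 0, klKernel lam mu x * x ^ (s - 1)
      = mu * (∫ x in Ioi 0, klKernel lam mu x * x ^ (s + 1 - 1))
        - (lam - mu) ^ 2 * (Gamma (s + 2) * lam ^ (-(s + 2))) := by
  have hK := integrableOn_klKernel_mul_rpow hlam hmu (s := s + 1) (by linarith)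
  have hE := integrableOn_rpow_mul_exp_neg_mul (p := s + 1) (by linarith) hlam
  rw [add_sub_cancel_right] at hK ⊢
  have hderiv : ∀ x ∈ Ioi (0 : ℝ),
      (-mu * klKernel lam mu x + (lam - mu) ^ 2 * x * exp (-(lam * x))) * x ^ s
        = -mu * (klKernel lam mu x * x ^ s) + (lam - mu) ^ 2 * (x ^ (s + 1) * exp (-(lam * x))) :=
    fun x hx => by rw [rpow_add_one (ne_of_gt hx)]; ring
  rw [mul_integral_Ioi_mul_rpow_sub_one (fun x _ => hasDerivAt_klKernel lam mu x)
      (integrableOn_klKernel_mul_rpow hlam hmu hs)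
      (IntegrableOn.congr_fun ((hK.const_mul _).add (hE.const_mul _))
        (fun x hx => (hderiv x hx).symm) measurableSet_Ioi)
      (tendsto_klKernel_mul_rpow_nhdsGT_zero hs) (tendsto_klKernel_mul_rpow_atTop hlam hmu s),
    setIntegral_congr_fun measurableSet_Ioi hderiv, integral_add (hK.const_mul _) (hE.const_mul _),
    integral_const_mul, integral_const_mul, integral_rpow_mul_exp_neg_mul (by linarith) hlam,
    show s + 1 + 1 = s + 2 by ring]
  ring

lemma klKernelMellin_recurrence (hlam : 0 < lam) (hmu : 0 < mu) {s : ℝ} (hs0 : s ≠ 0)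
    (hs1 : s ≠ -1) :
    s * klKernelMellin lam mu s
      = mu * klKernelMellin lam mu (s + 1)
        - (lam - mu) ^ 2 * (Gamma (s + 2) * lam ^ (-(s + 2))) := by
  have hΓ : Gamma (s + 2) = (s + 1) * (s * Gamma s) := by
    rw [show s + 2 = s + 1 + 1 by ring, Gamma_add_one (by contrapose! hs1; linarith),
      Gamma_add_one hs0]
  have hmu' : mu * mu ^ (-(s + 1)) = mu ^ (-s) := by
    rw [neg_add, rpow_add hmu, rpow_neg_one]; field_simp
  have hlam1 : lam ^ (-s - 1) = lam * lam ^ (-(s + 2)) := by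
    rw [mul_comm, ← rpow_add_one hlam.ne']; congr 1; ring
  have hlam0 : lam ^ (-s) = lam * (lam * lam ^ (-(s + 2))) := by
    rw [← hlam1, mul_comm, ← rpow_add_one hlam.ne', sub_add_cancel]
  rw [klKernelMellin, klKernelMellin, Gamma_add_one hs0, hΓ, ← hmu',
    show -(s + 1) - 1 = -(s + 2) by ring, show -(s + 1) = -s - 1 by ring, hlam0, hlam1]
  ring

lemma integral_klKernel_mul_rpow_of_succ (hlam : 0 < lam) (hmu : 0 < mu) {s : ℝ} (hs : -2 < s)
    (hs0 : s ≠ 0) (hs1 : s ≠ -1)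
    (h : ∫ x in Ioi 0, klKernel lam mu x * x ^ (s + 1 - 1) = klKernelMellin lam mu (s + 1)) :
    ∫ x in Ioi 0, klKernel lam mu x * x ^ (s - 1) = klKernelMellin lam mu s := by
  apply mul_left_cancel₀ hs0
  rw [integral_klKernel_mul_rpow_recurrence hlam hmu hs, h,
    klKernelMellin_recurrence hlam hmu hs0 hs1]

theorem integral_klKernel_mul_rpow (hlam : 0 < lam) (hmu : 0 < mu) {s : ℝ} (hs : -2 < s)
    (hs0 : s ≠ 0) (hs1 : s ≠ -1) :
    ∫ x in Ioi 0, klKernel lam mu x * x ^ (s - 1) = klKernelMellin lam mu s := by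
  rcases lt_or_gt_of_ne hs0 with hneg | hpos
  · refine integral_klKernel_mul_rpow_of_succ hlam hmu hs hs0 hs1 ?_
    rcases lt_or_gt_of_ne hs1 with hlt | hgt
    · exact integral_klKernel_mul_rpow_of_succ hlam hmu (by linarith) (by linarith) (by linarith)
        (integral_klKernel_mul_rpow_of_pos hlam hmu (by linarith))
    · exact integral_klKernel_mul_rpow_of_pos hlam hmu (by linarith)
  · exact integral_klKernel_mul_rpow_of_pos hlam hmu hpos

lemma klKernelMellin_neg (hlam : 0 < lam) (a : ℝ) :
    klKernelMellin lam mu (-a)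
      = Gamma (-a) * ((a - 1) * lam ^ a - a * mu * lam ^ (a - 1) + mu ^ a) := by
  have hpow : lam ^ a = lam * lam ^ (a - 1) := by
    rw [mul_comm, ← rpow_add_one hlam.ne', sub_add_cancel]
  rw [klKernelMellin, neg_neg, hpow]
  ring

end

lemma gts_integrand_eq_indicator {ap am Cp Cm lp lm mp mm : ℝ} {r : ℝ → ℝ}
    (hrp : ∀ x : ℝ, 0 < x → r x = exp (-((lp - mp) * x)))
    (hrm : ∀ x : ℝ, x < 0 → r x = exp (-((lm - mm) * |x|))) (x : ℝ) :
    (r x * log (r x) - r x + 1) * gtsDensity ap am Cp Cm mp mm x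
      = (Ioi 0).indicator (fun y => Cp * (klKernel lp mp y * y ^ (-ap - 1))) x
        + (Ioi 0).indicator (fun y => Cm * (klKernel lm mm y * y ^ (-am - 1))) (-x) := by
  rcases lt_trichotomy x 0 with hx | rfl | hx
  · rw [gtsDensity, if_neg hx.not_gt, if_pos hx, hrm x hx, abs_of_neg hx,
      indicator_of_notMem (notMem_Ioi.2 hx.le), indicator_of_mem (mem_Ioi.2 (neg_pos.2 hx)),
      ← entropy_mul_exp_eq_klKernel]
    ring
  · simp [gtsDensity]
  · rw [gtsDensity, if_pos hx, hrp x hx, indicator_of_mem (mem_Ioi.2 hx),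
      indicator_of_notMem (notMem_Ioi.2 (neg_nonpos.2 hx.le)), ← entropy_mul_exp_eq_klKernel]
    ring

theorem gts_kl_divergence_general (ap am Cp Cm lp lm mp mm T : ℝ)
    (hap : ap ∈ Ioo (0:ℝ) 2) (hap1 : ap ≠ 1)
    (ham : am ∈ Ioo (0:ℝ) 2) (ham1 : am ≠ 1)
    (hlp : 0 < lp) (hlm : 0 < lm)
    (hmp : 0 < mp) (hmm : 0 < mm)
    (r : ℝ → ℝ)
    (hrp : ∀ x : ℝ, 0 < x → r x = exp (-((lp - mp) * x)))
    (hrm : ∀ x : ℝ, x < 0 → r x = exp (-((lm - mm) * |x|))) :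
    Integrable (fun x : ℝ =>
      (r x * Real.log (r x) - r x + 1) * gtsDensity ap am Cp Cm mp mm x) ∧
    T * ∫ x : ℝ, (r x * Real.log (r x) - r x + 1) * gtsDensity ap am Cp Cm mp mm x
      = T * Cp * Gamma (-ap) * ((ap - 1) * lp ^ ap - ap * mp * lp ^ (ap - 1) + mp ^ ap)
        + T * Cm * Gamma (-am) * ((am - 1) * lm ^ am - am * mm * lm ^ (am - 1) + mm ^ am) := by
  obtain ⟨hap0, hap2⟩ := hap
  obtain ⟨ham0, ham2⟩ := ham
  have hp : IntegrableOn (fun y => Cp * (klKernel lp mp y * y ^ (-ap - 1))) (Ioi 0) :=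
    (integrableOn_klKernel_mul_rpow hlp hmp (by linarith)).const_mul Cp
  have hm : IntegrableOn (fun y => Cm * (klKernel lm mm y * y ^ (-am - 1))) (Ioi 0) :=
    (integrableOn_klKernel_mul_rpow hlm hmm (by linarith)).const_mul Cm
  simp_rw [gts_integrand_eq_indicator hrp hrm]
  refine ⟨integrable_indicator_add_indicator_comp_neg measurableSet_Ioi hp hm, ?_⟩
  rw [integral_indicator_add_indicator_comp_neg measurableSet_Ioi hp hm, integral_const_mul,
    integral_const_mul,
    integral_klKernel_mul_rpow hlp hmp (by linarith) (by linarith) (by contrapose! hap1; linarith),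
    integral_klKernel_mul_rpow hlm hmm (by linarith) (by linarith) (by contrapose! ham1; linarith),
    klKernelMellin_neg hlp, klKernelMellin_neg hlm]
  ring

/-- Kullback–Leibler divergence between two equivalent-martingale GTS processes. -/
theorem gts_kl_divergence (ap am Cp Cm lp lm mp mm T : ℝ)
    (hap : ap ∈ Ioo (0:ℝ) 2) (hap1 : ap ≠ 1)
    (ham : am ∈ Ioo (0:ℝ) 2) (ham1 : am ≠ 1)
    (hCp : 0 < Cp) (hCm : 0 < Cm) (hlp : 0 < lp) (hlm : 0 < lm)
    (hmp : 0 < mp) (hmm : 0 < mm) (hT : 0 < T)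
    (r : ℝ → ℝ)
    (hrp : ∀ x : ℝ, 0 < x → r x = exp (-((lp - mp) * x)))
    (hrm : ∀ x : ℝ, x < 0 → r x = exp (-((lm - mm) * |x|))) :
    Integrable (fun x : ℝ =>
      (r x * Real.log (r x) - r x + 1) * gtsDensity ap am Cp Cm mp mm x) ∧
    T * ∫ x : ℝ, (r x * Real.log (r x) - r x + 1) * gtsDensity ap am Cp Cm mp mm x
      = T * Cp * Gamma (-ap) * ((ap - 1) * lp ^ ap - ap * mp * lp ^ (ap - 1) + mp ^ ap)
        + T * Cm * Gamma (-am) * ((am - 1) * lm ^ am - am * mm * lm ^ (am - 1) + mm ^ am) :=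
  gts_kl_divergence_general ap am Cp Cm lp lm mp mm T hap hap1 ham ham1 hlp hlm hmp hmm r hrp hrm
end

section
/- Let a₊, a₋ ∈ (0,2)\{1}, let C₊, C₋, λ₊, λ₋, μ₊, μ₋ > 0 and T > 0. Define r : ℝ → ℝ by r(x) = exp(−(λ₊−μ₊)x) for x > 0 and r(x) = exp(−(λ₋−μ₋)|x|) for x < 0, and let ℓ̃ be the GTS Lévy density with parameters (a₊, a₋, C₊, C₋, μ₊, μ₋). Then the function x ↦ (r(x) − log r(x) − 1)·ℓ̃(x) is integrable on ℝ and T·∫_ℝ (r(x) − log r(x) − 1)·ℓ̃(x) dx = T·C₊·Γ(−a₊)·((a₊−1)·μ₊^{a₊} − a₊·λ₊·μ₊^{a₊−1} + λ₊^{a₊}) + T·C₋·Γ(−a₋)·((a₋−1)·μ₋^{a₋} − a₋·λ₋·μ₋^{a₋−1} + λ₋^{a₋}). -/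
/-!
On each half-line, `r - log r - 1` times the tempered density is, up to the constant `C`, the
first-order Taylor remainder of `λ ↦ e^{-λx}` at `μ`, times `x^{-a-1}`. Writing that remainder in
integral form, `x^{-a-1} · x² ∫_μ^λ (λ - s) e^{-sx} ds`, and swapping the integrals, the inner
`x`-integral is a Gamma integral, which leaves `Γ(2-a) ∫_μ^λ (λ - s) s^{a-2} ds`. This is
elementary, and `Γ(2-a) = a(a-1)Γ(-a)` turns it into the stated closed form.
-/

open MeasureTheory Real Set

open Function

theorem integrableOn_Iic_of_integrableOn_Ioi_comp_neg {E : Type*} [NormedAddCommGroup E]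
    {f : ℝ → E} (hneg : IntegrableOn (fun x => f (-x)) (Ioi 0)) : IntegrableOn f (Iic 0) := by
  rw [integrableOn_Iic_iff_integrableOn_Iio]
  rw [← neg_zero] at hneg
  simpa only [neg_neg] using hneg.comp_neg_Iio

theorem integrable_of_integrableOn_Ioi_of_comp_neg {E : Type*} [NormedAddCommGroup E]
    {f : ℝ → E} (hpos : IntegrableOn f (Ioi 0))
    (hneg : IntegrableOn (fun x => f (-x)) (Ioi 0)) : Integrable f := by
  rw [← integrableOn_univ, ← Iic_union_Ioi (a := 0)]
  exact (integrableOn_Iic_of_integrableOn_Ioi_comp_neg hneg).union hpos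

theorem integral_eq_integral_Ioi_add_integral_Ioi_comp_neg {E : Type*} [NormedAddCommGroup E]
    [NormedSpace ℝ E] {f : ℝ → E} (hpos : IntegrableOn f (Ioi 0))
    (hneg : IntegrableOn (fun x => f (-x)) (Ioi 0)) :
    ∫ x, f x = (∫ x in Ioi 0, f x) + ∫ x in Ioi 0, f (-x) := by
  rw [← intervalIntegral.integral_Iic_add_Ioi
    (integrableOn_Iic_of_integrableOn_Ioi_comp_neg hneg) hpos, add_comm, integral_comp_neg_Ioi 0 f,
    neg_zero]

theorem integrableOn_Ioi_rpow_mul_exp_neg_mul {p s : ℝ} (hp : -1 < p) (hs : 0 < s) :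
    IntegrableOn (fun x => x ^ p * exp (-(s * x))) (Ioi 0) := by
  simpa only [rpow_one, neg_mul] using integrableOn_rpow_mul_exp_neg_mul_rpow hp one_pos hs

theorem integral_Ioi_rpow_mul_exp_neg_mul {p s : ℝ} (hp : -1 < p) (hs : 0 < s) :
    ∫ x in Ioi 0, x ^ p * exp (-(s * x)) = s ^ (-(p + 1)) * Gamma (p + 1) := by
  have := integral_rpow_mul_exp_neg_mul_Ioi (a := p + 1) (by linarith) hs
  rwa [add_sub_cancel_right, one_div, inv_rpow hs.le, ← rpow_neg hs.le] at this

theorem integrable_prod_mul_rpow_mul_exp_neg_mul {g : ℝ → ℝ} (hg : Continuous g)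
    {p b₁ b₂ : ℝ} (hp : -1 < p) (hb₁ : 0 < b₁) (hb₂ : 0 < b₂) :
    Integrable (uncurry fun s x => g s * (x ^ p * exp (-(s * x))))
      ((volume.restrict (uIoc b₁ b₂)).prod (volume.restrict (Ioi 0))) := by
  have hpos : ∀ s ∈ uIcc b₁ b₂, 0 < s := fun s hs => lt_of_lt_of_le (lt_min hb₁ hb₂) hs.1
  rw [integrable_prod_iff (by fun_prop : Measurable _).aestronglyMeasurable]
  constructor
  · filter_upwards [ae_restrict_mem measurableSet_uIoc] with s hs
    exact (integrableOn_Ioi_rpow_mul_exp_neg_mul hp (hpos s (uIoc_subset_uIcc hs))).const_mul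
      (g s)
  · have hcont :
        ContinuousOn (fun s => |g s| * (s ^ (-(p + 1)) * Gamma (p + 1))) (uIcc b₁ b₂) :=
      hg.abs.continuousOn.mul
        ((continuousOn_id.rpow_const fun s hs => Or.inl (hpos s hs).ne').mul continuousOn_const)
    refine (hcont.integrableOn_uIcc.mono_set uIoc_subset_uIcc).congr_fun (fun s hs => ?_)
      measurableSet_uIoc
    have hs := hpos s (uIoc_subset_uIcc hs)
    simp only [uncurry_apply_pair, norm_mul, norm_eq_abs, abs_exp]
    rw [integral_const_mul, ← integral_Ioi_rpow_mul_exp_neg_mul hp hs]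
    refine congrArg _ (setIntegral_congr_fun measurableSet_Ioi fun x (hx : 0 < x) => ?_)
    rw [abs_of_nonneg (rpow_nonneg hx.le _)]

theorem Gamma_two_sub {a : ℝ} (ha₀ : a ≠ 0) (ha₁ : a ≠ 1) :
    Gamma (2 - a) = a * (a - 1) * Gamma (-a) := by
  rw [show 2 - a = (-a + 1) + 1 by ring, Gamma_add_one (by contrapose! ha₁; linarith),
    Gamma_add_one (neg_ne_zero.mpr ha₀)]
  ring

section TaylorRemainder

/-- The first-order Taylor remainder of `λ ↦ e^{-λx}` at `λ = m`, evaluated at `λ = l`. -/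
noncomputable def expTaylorRemainder (l m x : ℝ) : ℝ :=
  exp (-(l * x)) - exp (-(m * x)) + (l - m) * x * exp (-(m * x))

theorem exp_sub_log_exp_sub_one_mul_exp (l m x : ℝ) :
    (exp (-((l - m) * x)) - log (exp (-((l - m) * x))) - 1) * exp (-(m * x))
      = expTaylorRemainder l m x := by
  rw [log_exp, expTaylorRemainder, show -(l * x) = -((l - m) * x) + -(m * x) by ring, exp_add]
  ring

theorem expTaylorRemainder_eq_integral (l m x : ℝ) :
    expTaylorRemainder l m x = ∫ s in m..l, (l - s) * x ^ 2 * exp (-(s * x)) := by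
  have hG : ∀ s, HasDerivAt (fun s => (1 - (l - s) * x) * exp (-(s * x)))
      ((l - s) * x ^ 2 * exp (-(s * x))) s := by
    intro s
    have h₁ : HasDerivAt (fun s => 1 - (l - s) * x) x s := by
      simpa using (((hasDerivAt_id s).const_sub l).mul_const x).const_sub 1
    have h₂ : HasDerivAt (fun s => exp (-(s * x))) (-x * exp (-(s * x))) s := by
      simpa [mul_comm] using ((hasDerivAt_id s).mul_const x).neg.exp
    exact (h₁.mul h₂).congr_deriv (by ring)
  rw [intervalIntegral.integral_eq_sub_of_hasDerivAt (fun s _ => hG s)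
    ((by fun_prop : Continuous _).intervalIntegrable _ _), expTaylorRemainder]
  ring

theorem expTaylorRemainder_mul_rpow_eqOn (a l m : ℝ) :
    EqOn (fun x => expTaylorRemainder l m x * x ^ (-a - 1))
      (fun x => ∫ s in m..l, (l - s) * (x ^ (1 - a) * exp (-(s * x)))) (Ioi 0) := by
  intro x (hx : 0 < x)
  have hpow : x ^ 2 * x ^ (-a - 1) = x ^ (1 - a) := by
    rw [← rpow_natCast, ← rpow_add hx]
    ring_nf
  dsimp only
  rw [expTaylorRemainder_eq_integral, ← intervalIntegral.integral_mul_const]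
  congr 1 with s
  rw [← hpow]
  ring

variable {a l m : ℝ}

theorem integrableOn_Ioi_expTaylorRemainder_mul_rpow (ha : a < 2) (hl : 0 < l) (hm : 0 < m) :
    IntegrableOn (fun x => expTaylorRemainder l m x * x ^ (-a - 1)) (Ioi 0) := by
  refine IntegrableOn.congr_fun ?_ (expTaylorRemainder_mul_rpow_eqOn a l m).symm
    measurableSet_Ioi
  simp_rw [intervalIntegral.intervalIntegral_eq_integral_uIoc, smul_eq_mul]
  exact (integrable_prod_mul_rpow_mul_exp_neg_mul (g := fun s => l - s) (by fun_prop)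
    (show -1 < 1 - a by linarith) hm hl).integral_prod_right.const_mul _

theorem integral_Ioi_expTaylorRemainder_mul_rpow_eq_integral (ha : a < 2) (hl : 0 < l)
    (hm : 0 < m) :
    ∫ x in Ioi 0, expTaylorRemainder l m x * x ^ (-a - 1)
      = Gamma (2 - a) * ∫ s in m..l, (l - s) * s ^ (a - 2) := by
  rw [setIntegral_congr_fun measurableSet_Ioi (expTaylorRemainder_mul_rpow_eqOn a l m),
    ← intervalIntegral_integral_swap (integrable_prod_mul_rpow_mul_exp_neg_mul
      (g := fun s => l - s) (by fun_prop) (show -1 < 1 - a by linarith) hm hl),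
    ← intervalIntegral.integral_const_mul]
  refine intervalIntegral.integral_congr fun s hs => ?_
  have hs : 0 < s := lt_of_lt_of_le (lt_min hm hl) hs.1
  rw [integral_const_mul, integral_Ioi_rpow_mul_exp_neg_mul (by linarith) hs,
    show -(1 - a + 1) = a - 2 by ring, show 1 - a + 1 = 2 - a by ring]
  ring

theorem integral_sub_mul_rpow (ha₀ : a ≠ 0) (ha₁ : a ≠ 1) (hl : 0 < l) (hm : 0 < m) :
    ∫ s in m..l, (l - s) * s ^ (a - 2)
      = (l ^ a - a * l * m ^ (a - 1) + (a - 1) * m ^ a) / (a * (a - 1)) := by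
  have hpos : ∀ s ∈ uIcc m l, 0 < s := fun s hs => lt_of_lt_of_le (lt_min hm hl) hs.1
  have h0 : (0 : ℝ) ∉ uIcc m l := fun h => (hpos 0 h).false
  have hsplit : ∀ s ∈ uIcc m l, (l - s) * s ^ (a - 2) = l * s ^ (a - 2) - s ^ (a - 1) := by
    intro s hs
    rw [sub_mul, show a - 1 = 1 + (a - 2) by ring, rpow_add (hpos s hs), rpow_one]
  rw [intervalIntegral.integral_congr hsplit, intervalIntegral.integral_sub
      ((intervalIntegral.intervalIntegrable_rpow (Or.inr h0)).const_mul l)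
      (intervalIntegral.intervalIntegrable_rpow (Or.inr h0)),
    intervalIntegral.integral_const_mul,
    integral_rpow (Or.inr ⟨by contrapose! ha₁; linarith, h0⟩),
    integral_rpow (Or.inr ⟨by contrapose! ha₀; linarith, h0⟩),
    show a - 2 + 1 = a - 1 by ring, show a - 1 + 1 = a by ring,
    show l ^ a = l * l ^ (a - 1) by rw [← rpow_one_add' hl.le (by simpa using ha₀)]; ring_nf]
  have : a - 1 ≠ 0 := sub_ne_zero.mpr ha₁
  field_simp
  ring

theorem integral_Ioi_expTaylorRemainder_mul_rpow (ha₀ : a ≠ 0) (ha₁ : a ≠ 1) (ha₂ : a < 2)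
    (hl : 0 < l) (hm : 0 < m) :
    ∫ x in Ioi 0, expTaylorRemainder l m x * x ^ (-a - 1)
      = Gamma (-a) * ((a - 1) * m ^ a - a * l * m ^ (a - 1) + l ^ a) := by
  rw [integral_Ioi_expTaylorRemainder_mul_rpow_eq_integral ha₂ hl hm, Gamma_two_sub ha₀ ha₁,
    integral_sub_mul_rpow ha₀ ha₁ hl hm]
  have : a - 1 ≠ 0 := sub_ne_zero.mpr ha₁
  field_simp
  ring

end TaylorRemainder

theorem gts_dual_kl_divergence_general (ap am Cp Cm lp lm mp mm T : ℝ)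
    (hap : ap ∈ Ioo (0:ℝ) 2) (hap1 : ap ≠ 1)
    (ham : am ∈ Ioo (0:ℝ) 2) (ham1 : am ≠ 1)
    (hlp : 0 < lp) (hlm : 0 < lm)
    (hmp : 0 < mp) (hmm : 0 < mm)
    (r : ℝ → ℝ)
    (hrp : ∀ x : ℝ, 0 < x → r x = exp (-((lp - mp) * x)))
    (hrm : ∀ x : ℝ, x < 0 → r x = exp (-((lm - mm) * |x|))) :
    Integrable (fun x : ℝ =>
      (r x - Real.log (r x) - 1) * gtsDensity ap am Cp Cm mp mm x) ∧
    T * ∫ x : ℝ, (r x - Real.log (r x) - 1) * gtsDensity ap am Cp Cm mp mm x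
      = T * Cp * Gamma (-ap) * ((ap - 1) * mp ^ ap - ap * lp * mp ^ (ap - 1) + lp ^ ap)
        + T * Cm * Gamma (-am) * ((am - 1) * mm ^ am - am * lm * mm ^ (am - 1) + lm ^ am) := by
  set F := fun x => (r x - Real.log (r x) - 1) * gtsDensity ap am Cp Cm mp mm x
  have hpos : EqOn F (fun x => Cp * (expTaylorRemainder lp mp x * x ^ (-ap - 1))) (Ioi 0) := by
    intro x (hx : 0 < x)
    simp only [F, gtsDensity, if_pos hx, hrp x hx, ← exp_sub_log_exp_sub_one_mul_exp]
    ring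
  have hneg : EqOn (fun x => F (-x)) (fun x => Cm * (expTaylorRemainder lm mm x * x ^ (-am - 1)))
      (Ioi 0) := by
    intro x (hx : 0 < x)
    have hx' : -x < 0 := neg_neg_of_pos hx
    simp only [F, gtsDensity, if_neg hx'.not_gt, if_pos hx', hrm _ hx', abs_neg, abs_of_pos hx,
      ← exp_sub_log_exp_sub_one_mul_exp]
    ring
  have hFpos : IntegrableOn F (Ioi 0) := IntegrableOn.congr_fun
    ((integrableOn_Ioi_expTaylorRemainder_mul_rpow hap.2 hlp hmp).const_mul Cp) hpos.symm
    measurableSet_Ioi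
  have hFneg : IntegrableOn (fun x => F (-x)) (Ioi 0) := IntegrableOn.congr_fun
    ((integrableOn_Ioi_expTaylorRemainder_mul_rpow ham.2 hlm hmm).const_mul Cm) hneg.symm
    measurableSet_Ioi
  refine ⟨integrable_of_integrableOn_Ioi_of_comp_neg hFpos hFneg, ?_⟩
  rw [integral_eq_integral_Ioi_add_integral_Ioi_comp_neg hFpos hFneg,
    setIntegral_congr_fun measurableSet_Ioi hpos, setIntegral_congr_fun measurableSet_Ioi hneg,
    integral_const_mul, integral_const_mul,
    integral_Ioi_expTaylorRemainder_mul_rpow hap.1.ne' hap1 hap.2 hlp hmp,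
    integral_Ioi_expTaylorRemainder_mul_rpow ham.1.ne' ham1 ham.2 hlm hmm]
  ring

/-- The 1-divergence (dual Kullback–Leibler divergence) between two
equivalent-martingale GTS processes. -/
theorem gts_dual_kl_divergence (ap am Cp Cm lp lm mp mm T : ℝ)
    (hap : ap ∈ Ioo (0:ℝ) 2) (hap1 : ap ≠ 1)
    (ham : am ∈ Ioo (0:ℝ) 2) (ham1 : am ≠ 1)
    (hCp : 0 < Cp) (hCm : 0 < Cm) (hlp : 0 < lp) (hlm : 0 < lm)
    (hmp : 0 < mp) (hmm : 0 < mm) (hT : 0 < T)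
    (r : ℝ → ℝ)
    (hrp : ∀ x : ℝ, 0 < x → r x = exp (-((lp - mp) * x)))
    (hrm : ∀ x : ℝ, x < 0 → r x = exp (-((lm - mm) * |x|))) :
    Integrable (fun x : ℝ =>
      (r x - Real.log (r x) - 1) * gtsDensity ap am Cp Cm mp mm x) ∧
    T * ∫ x : ℝ, (r x - Real.log (r x) - 1) * gtsDensity ap am Cp Cm mp mm x
      = T * Cp * Gamma (-ap) * ((ap - 1) * mp ^ ap - ap * lp * mp ^ (ap - 1) + lp ^ ap)
        + T * Cm * Gamma (-am) * ((am - 1) * mm ^ am - am * lm * mm ^ (am - 1) + lm ^ am) :=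
  gts_dual_kl_divergence_general ap am Cp Cm lp lm mp mm T hap hap1 ham ham1 hlp hlm hmp hmm r hrp
    hrm
end
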